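/- arXiv:2207.11781 — 3 statements merged into one kernel-verified Lean document; each statement's English description precedes it below -/
import Mathlib

section
/- Let n ≥ 1 and let v, w ∈ ℂⁿ with ‖v‖ = 1 (w arbitrary, possibly subnormalized). Then the trace norm of the Hermitian matrix v v† − w w† satisfies ‖v v† − w w†‖₁ = 2·√( (1/4)·(1 + ‖w‖²)² − |⟨v,w⟩|² ). Equivalently, the trace distance between the (possibly unnormalized) pure states v and w equals √( (1/4)(1+‖w‖²)² − |⟨v,w⟩|² ). -/
/-- The outer product `v v†` of a vector with itself: the matrix with
`(i, j)` entry `vᵢ · conj (v_j)`. -/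
noncomputable def outerProd {ι : Type*} (v : ι → ℂ) : Matrix ι ι ℂ :=
  Matrix.of fun i j => v i * (starRingEnd ℂ) (v j)

/-- The trace norm of a Hermitian matrix: the sum of the absolute values of its
eigenvalues, counted with multiplicity. -/
noncomputable def traceNormHerm {ι : Type*} [Fintype ι] [DecidableEq ι]
    {A : Matrix ι ι ℂ} (hA : A.IsHermitian) : ℝ :=
  ∑ i, |hA.eigenvalues i|

/-!
For `A = x x† - y y†` put `s = ‖x‖² - ‖y‖²` and `p = |⟨x, y⟩|² - ‖x‖² ‖y‖²`, so `p ≤ 0` by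
Cauchy–Schwarz. On `span {x, y}` the matrix `A` has trace `s` and determinant `p`, and it kills
the orthogonal complement, so `A³ = s A² - p A`, `tr A = s` and `tr A² = s² - 2p`.
Every eigenvalue `μ` is then `0` or a root of `μ² - sμ + p`; since `p ≤ 0` these roots have
opposite signs, which gives `|μ| √(s² - 4p) = 2μ² - sμ`. Summing over the eigenvalues yields
`‖A‖₁ √(s² - 4p) = 2 tr A² - s tr A = s² - 4p`.
-/

open Matrix

theorem abs_mul_sqrt_discrim_of_cubic {s p μ : ℝ} (hp : p ≤ 0) (h : μ ^ 3 = s * μ ^ 2 - p * μ) :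
    |μ| * √(s ^ 2 - 4 * p) = 2 * μ ^ 2 - s * μ := by
  rcases eq_or_ne μ 0 with rfl | hμ
  · simp
  have hq : μ ^ 2 - s * μ + p = 0 := by
    apply mul_left_cancel₀ hμ
    linear_combination h
  have hdisc : s ^ 2 - 4 * p = (2 * μ - s) ^ 2 := by linear_combination (-4) * hq
  have hsign : 0 ≤ μ * (2 * μ - s) := by nlinarith
  rw [hdisc, Real.sqrt_sq_eq_abs, ← abs_mul, abs_of_nonneg hsign]
  ring

section RankTwo

variable {ι R : Type*} [Fintype ι] [DecidableEq ι] [CommRing R] (a b c d : ι → R)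

theorem vecMulVec_sub_vecMulVec_pow_three :
    (vecMulVec a b - vecMulVec c d) ^ 3 =
      (b ⬝ᵥ a - d ⬝ᵥ c) • (vecMulVec a b - vecMulVec c d) ^ 2
        - ((b ⬝ᵥ c) * (d ⬝ᵥ a) - (b ⬝ᵥ a) * (d ⬝ᵥ c)) • (vecMulVec a b - vecMulVec c d) := by
  simp only [pow_succ, pow_zero, one_mul, sub_mul, mul_sub, smul_mul_assoc,
    vecMulVec_mul_vecMulVec, vecMulVec_smul]
  module

theorem trace_vecMulVec_sub_vecMulVec_sq :
    ((vecMulVec a b - vecMulVec c d) ^ 2).trace =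
      (b ⬝ᵥ a) ^ 2 + (d ⬝ᵥ c) ^ 2 - 2 * ((b ⬝ᵥ c) * (d ⬝ᵥ a)) := by
  simp only [sq, sub_mul, mul_sub, vecMulVec_mul_vecMulVec, vecMulVec_smul, trace_sub,
    trace_smul, trace_vecMulVec, smul_eq_mul]
  simp only [dotProduct_comm a, dotProduct_comm c]
  ring

end RankTwo

namespace Matrix.IsHermitian

variable {ι : Type*} [Fintype ι] [DecidableEq ι]

theorem trace_pow_eq_sum_eigenvalues_pow {𝕜 : Type*} [RCLike 𝕜] {A : Matrix ι ι 𝕜}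
    (hA : A.IsHermitian) (k : ℕ) : (A ^ k).trace = ∑ i, (hA.eigenvalues i : 𝕜) ^ k := by
  conv_lhs => rw [hA.spectral_theorem, ← map_pow, Unitary.conjStarAlgAut_apply, trace_mul_cycle,
    Unitary.coe_star_mul_self, one_mul, diagonal_pow, trace_diagonal]
  rfl

theorem eigenvalues_pow_three_eq {𝕜 : Type*} [RCLike 𝕜] {A : Matrix ι ι 𝕜} (hA : A.IsHermitian)
    {s p : ℝ} (h : A ^ 3 = (s : 𝕜) • A ^ 2 - (p : 𝕜) • A) (i : ι) :
    hA.eigenvalues i ^ 3 = s * hA.eigenvalues i ^ 2 - p * hA.eigenvalues i := by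
  rw [hA.spectral_theorem, ← map_pow, ← map_pow, ← map_smul, ← map_smul, ← map_sub] at h
  have hD := congr_fun₂ ((Unitary.conjStarAlgAut 𝕜 (Matrix ι ι 𝕜) _).injective h) i i
  simp only [diagonal_pow, sub_apply, smul_apply, diagonal_apply_eq, Pi.pow_apply,
    Function.comp_apply, smul_eq_mul] at hD
  exact_mod_cast hD

theorem traceNormHerm_eq_sqrt_of_pow_three {A : Matrix ι ι ℂ} (hA : A.IsHermitian) {s p : ℝ}
    (hp : p ≤ 0) (hcube : A ^ 3 = (s : ℂ) • A ^ 2 - (p : ℂ) • A) (htr : A.trace = s)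
    (htr_sq : (A ^ 2).trace = (s ^ 2 - 2 * p : ℝ)) :
    traceNormHerm hA = √(s ^ 2 - 4 * p) := by
  have hsum : ∑ i, hA.eigenvalues i = s := by
    have := hA.trace_eq_sum_eigenvalues.symm.trans htr
    exact Complex.ofReal_injective (by push_cast at this ⊢; exact this)
  have hsum_sq : ∑ i, hA.eigenvalues i ^ 2 = s ^ 2 - 2 * p := by
    have := (hA.trace_pow_eq_sum_eigenvalues_pow 2).symm.trans htr_sq
    exact Complex.ofReal_injective (by push_cast at this ⊢; exact this)
  have hD : 0 ≤ s ^ 2 - 4 * p := by nlinarith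
  have hkey : traceNormHerm hA * √(s ^ 2 - 4 * p) = s ^ 2 - 4 * p := by
    rw [traceNormHerm, Finset.sum_mul, Finset.sum_congr rfl fun i _ =>
        abs_mul_sqrt_discrim_of_cubic hp (hA.eigenvalues_pow_three_eq hcube i),
      Finset.sum_sub_distrib, ← Finset.mul_sum, ← Finset.mul_sum, hsum, hsum_sq]
    ring
  rcases hD.eq_or_lt with hD0 | hDpos
  · have hs : s = 0 := by nlinarith
    have hp0 : p = 0 := by nlinarith
    have hμ : ∀ i, hA.eigenvalues i = 0 := fun i => by
      simpa [hs, hp0] using hA.eigenvalues_pow_three_eq hcube i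
    simp [traceNormHerm, hμ, hs, hp0]
  · exact mul_right_cancel₀ (Real.sqrt_pos.2 hDpos).ne'
      (hkey.trans (Real.mul_self_sqrt hD).symm)

end Matrix.IsHermitian

theorem EuclideanSpace.star_dotProduct_eq_inner {𝕜 ι : Type*} [RCLike 𝕜] [Fintype ι]
    (x y : EuclideanSpace 𝕜 ι) : star ⇑x ⬝ᵥ ⇑y = inner 𝕜 x y := by
  rw [EuclideanSpace.inner_eq_star_dotProduct, dotProduct_comm]

open ComplexConjugate in
theorem traceNormHerm_outerProd_sub_outerProd {ι : Type*} [Fintype ι] [DecidableEq ι]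
    (x y : EuclideanSpace ℂ ι) (hH : (outerProd ⇑x - outerProd ⇑y).IsHermitian) :
    traceNormHerm hH = √((‖x‖ ^ 2 + ‖y‖ ^ 2) ^ 2 - 4 * ‖inner ℂ x y‖ ^ 2) := by
  have hA : outerProd ⇑x - outerProd ⇑y = vecMulVec ⇑x (star ⇑x) - vecMulVec ⇑y (star ⇑y) := rfl
  have hxx : star ⇑x ⬝ᵥ ⇑x = ((‖x‖ ^ 2 : ℝ) : ℂ) := by
    rw [EuclideanSpace.star_dotProduct_eq_inner, inner_self_eq_norm_sq_to_K]; push_cast; rfl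
  have hyy : star ⇑y ⬝ᵥ ⇑y = ((‖y‖ ^ 2 : ℝ) : ℂ) := by
    rw [EuclideanSpace.star_dotProduct_eq_inner, inner_self_eq_norm_sq_to_K]; push_cast; rfl
  have hxy := EuclideanSpace.star_dotProduct_eq_inner x y
  have hyx : star ⇑y ⬝ᵥ ⇑x = conj (inner ℂ x y) := by
    rw [EuclideanSpace.star_dotProduct_eq_inner, inner_conj_symm]
  have hcc : inner ℂ x y * conj (inner ℂ x y) = ((‖inner ℂ x y‖ ^ 2 : ℝ) : ℂ) := by
    rw [Complex.mul_conj']; push_cast; rfl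
  have hp : ‖inner ℂ x y‖ ^ 2 - ‖x‖ ^ 2 * ‖y‖ ^ 2 ≤ 0 := by
    rw [sub_nonpos, ← mul_pow]
    exact pow_le_pow_left₀ (norm_nonneg _) (norm_inner_le_norm x y) 2
  convert hH.traceNormHerm_eq_sqrt_of_pow_three (s := ‖x‖ ^ 2 - ‖y‖ ^ 2) hp ?_ ?_ ?_ using 2
  · ring
  · rw [hA, vecMulVec_sub_vecMulVec_pow_three, hxx, hyy, hxy, hyx, hcc]
    push_cast; rfl
  · rw [hA, trace_sub, trace_vecMulVec, trace_vecMulVec, dotProduct_comm, dotProduct_comm ⇑y,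
      hxx, hyy]
    push_cast; rfl
  · rw [hA, trace_vecMulVec_sub_vecMulVec_sq, hxx, hyy, hxy, hyx, hcc]
    push_cast; ring

theorem trace_norm_pure_states_eq_general {n : ℕ}
    (v w : EuclideanSpace ℂ (Fin n)) (hv : ‖v‖ = 1)
    (hH : (outerProd (fun i => v i) - outerProd (fun i => w i)).IsHermitian) :
    traceNormHerm hH =
      2 * Real.sqrt ((1 / 4) * (1 + ‖w‖ ^ 2) ^ 2
          - ‖inner (𝕜 := ℂ) v w‖ ^ 2) := by
  rw [traceNormHerm_outerProd_sub_outerProd, hv,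
    show (1 ^ 2 + ‖w‖ ^ 2) ^ 2 - 4 * ‖inner ℂ v w‖ ^ 2
      = 2 ^ 2 * ((1 / 4) * (1 + ‖w‖ ^ 2) ^ 2 - ‖inner ℂ v w‖ ^ 2) by ring,
    Real.sqrt_mul (by positivity), Real.sqrt_sq zero_le_two]

/-- Lemma 2 of the paper: for a normalized pure state `v` and a (possibly
subnormalized) pure state `w`,
`‖v v† − w w†‖₁ = 2 √( ¼ (1 + ‖w‖²)² − |⟨v, w⟩|² )`. -/
theorem trace_norm_pure_states_eq {n : ℕ} (hn : 1 ≤ n)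
    (v w : EuclideanSpace ℂ (Fin n)) (hv : ‖v‖ = 1)
    (hH : (outerProd (fun i => v i) - outerProd (fun i => w i)).IsHermitian) :
    traceNormHerm hH =
      2 * Real.sqrt ((1 / 4) * (1 + ‖w‖ ^ 2) ^ 2
          - ‖inner (𝕜 := ℂ) v w‖ ^ 2) :=
  trace_norm_pure_states_eq_general v w hv hH
end

section
/- Let (c_k)_{k∈ℕ} be nonnegative reals with Σ_{k≥0} c_k = 1, Σ_{k≥0} k·c_k = E, and Σ_{k≥0} k²·c_k = M (all series convergent). Then for every ξ ≥ 0 and every real N > 0: 1 − ( Σ_{k≥0} (k+1)·(cosh ξ)^{−k}·c_k / (E+1) )² ≤ N·ξ² + (2/N)·(E+M)/(E+1). -/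
/-!
Put `a = (cosh ξ)⁻¹ ∈ (0, 1]`, so that the sum is `S = Σ (k+1) aᵏ c_k`,
and `r = S / (E+1)`.
Bernoulli's inequality `1 - aᵏ ≤ k (1 - a)` gives `E + 1 - S ≤ (1 - a)(E + M)`, and
`cosh ξ ≤ exp (ξ²/2)` gives `1 - a ≤ ξ²/2`. Since `1 - r² ≤ 2 (1 - r)`, this yields
`1 - r² ≤ ξ² B` with `B = (E+M)/(E+1)`; together with `1 - r² ≤ 1` this is at most
`N ξ² + B/N`, according as `B ≤ N` or not.
-/

open Real

lemma Real.one_sub_inv_cosh_le (x : ℝ) : 1 - (cosh x)⁻¹ ≤ x ^ 2 / 2 := by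
  have h : exp (-(x ^ 2 / 2)) ≤ (cosh x)⁻¹ := by
    rw [exp_neg]
    exact inv_anti₀ (cosh_pos x) (cosh_le_exp_half_sq x)
  linarith [add_one_le_exp (-(x ^ 2 / 2))]

lemma min_one_mul_le_mul_add_div {x y N : ℝ} (hx : 0 ≤ x) (hy : 0 ≤ y) (hN : 0 < N) :
    min 1 (x * y) ≤ N * x + y / N := by
  rcases le_or_gt y N with hyN | hNy
  · have : x * y ≤ N * x := by nlinarith
    exact (min_le_right _ _).trans (by linarith [div_nonneg hy hN.le])
  · have : 1 < y / N := (one_lt_div hN).2 hNy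
    exact (min_le_left _ _).trans (by nlinarith)

lemma sub_mul_le_tsum_succ_mul_pow_mul {c : ℕ → ℝ} (hc : ∀ k, 0 ≤ c k) (h0 : Summable c)
    (h1 : Summable fun k : ℕ => (k : ℝ) * c k) (h2 : Summable fun k : ℕ => (k : ℝ) ^ 2 * c k)
    {a : ℝ} (ha0 : 0 ≤ a) (ha1 : a ≤ 1) :
    (∑' k : ℕ, (k : ℝ) * c k + ∑' k : ℕ, c k) -
        (1 - a) * (∑' k : ℕ, (k : ℝ) * c k + ∑' k : ℕ, (k : ℝ) ^ 2 * c k) ≤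
      ∑' k : ℕ, ((k : ℝ) + 1) * a ^ k * c k := by
  have hsummable : Summable fun k : ℕ => ((k : ℝ) + 1) * a ^ k * c k := by
    refine (h1.add h0).of_nonneg_of_le (fun k => by have := hc k; positivity) fun k => ?_
    have : ((k : ℝ) + 1) * a ^ k ≤ (k : ℝ) + 1 :=
      mul_le_of_le_one_right (by positivity) (pow_le_one₀ ha0 ha1)
    nlinarith [hc k]
  have hlower := (h1.hasSum.add h0.hasSum).sub ((h1.hasSum.add h2.hasSum).mul_left (1 - a))
  refine hasSum_le (fun k => ?_) hlower hsummable.hasSum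
  have hbernoulli : 1 - a ^ k ≤ k * (1 - a) := by
    linarith [one_add_mul_sub_le_pow (show -1 ≤ a by linarith) k]
  have hweight : 0 ≤ ((k : ℝ) + 1) * c k := by have := hc k; positivity
  nlinarith [mul_le_mul_of_nonneg_left hbernoulli hweight]

theorem overlap_bound_general (c : ℕ → ℝ) (hc : ∀ k, 0 ≤ c k)
    (h0 : Summable c)
    (h1 : Summable fun k : ℕ => (k : ℝ) * c k)
    (h2 : Summable fun k : ℕ => (k : ℝ) ^ 2 * c k)
    (E M : ℝ)
    (hsum : ∑' k : ℕ, c k = 1)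
    (hE : ∑' k : ℕ, (k : ℝ) * c k = E)
    (hM : ∑' k : ℕ, (k : ℝ) ^ 2 * c k = M)
    (ξ : ℝ) (N : ℝ) (hN : 0 < N) :
    1 - ((∑' k : ℕ, ((k : ℝ) + 1) * Real.cosh ξ ^ (-(k : ℝ)) * c k) / (E + 1)) ^ 2 ≤
      N * ξ ^ 2 + (2 / N) * ((E + M) / (E + 1)) := by
  have hcosh : 0 < cosh ξ := cosh_pos ξ
  have hrpow (k : ℕ) : cosh ξ ^ (-(k : ℝ)) = (cosh ξ)⁻¹ ^ k := by
    rw [rpow_neg hcosh.le, rpow_natCast, inv_pow]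
  have hE0 : 0 ≤ E := hE ▸ tsum_nonneg fun k => mul_nonneg k.cast_nonneg (hc k)
  have hM0 : 0 ≤ M := hM ▸ tsum_nonneg fun k => mul_nonneg (sq_nonneg _) (hc k)
  have hS := sub_mul_le_tsum_succ_mul_pow_mul hc h0 h1 h2 (inv_nonneg.2 hcosh.le)
    (inv_le_one_of_one_le₀ (one_le_cosh ξ))
  rw [hsum, hE, hM] at hS
  simp_rw [hrpow]
  set r := (∑' k : ℕ, ((k : ℝ) + 1) * (cosh ξ)⁻¹ ^ k * c k) / (E + 1)
  set B := (E + M) / (E + 1)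
  have hB : 0 ≤ B := by positivity
  have hr : 1 - (1 - (cosh ξ)⁻¹) * B ≤ r := by
    calc 1 - (1 - (cosh ξ)⁻¹) * B = (E + 1 - (1 - (cosh ξ)⁻¹) * (E + M)) / (E + 1) := by
          simp only [B]; field_simp
      _ ≤ r := div_le_div_of_nonneg_right hS (by positivity)
  have hcosh_le := mul_le_mul_of_nonneg_right (one_sub_inv_cosh_le ξ) hB
  have hsq : 1 - r ^ 2 ≤ 2 * (1 - r) := by nlinarith [sq_nonneg (1 - r)]
  calc 1 - r ^ 2 ≤ min 1 (ξ ^ 2 * B) := le_min (by nlinarith [sq_nonneg r]) (by linarith)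
    _ ≤ N * ξ ^ 2 + B / N := min_one_mul_le_mul_add_div (sq_nonneg ξ) hB hN
    _ ≤ N * ξ ^ 2 + (2 / N) * B := by
      have := div_nonneg hB hN.le
      linarith [show 2 / N * B = 2 * (B / N) by ring]

/-- The overlap bound in the proof of Lemma 3 of the paper: for nonnegative
`(c_k)` with `Σ c_k = 1`, `Σ k c_k = E`, `Σ k² c_k = M`, every `ξ ≥ 0` and
every real `N > 0`,
`1 − (Σ (k+1)(cosh ξ)^(−k) c_k / (E+1))² ≤ N ξ² + (2/N)(E+M)/(E+1)`. -/
theorem overlap_bound (c : ℕ → ℝ) (hc : ∀ k, 0 ≤ c k)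
    (h0 : Summable c)
    (h1 : Summable fun k : ℕ => (k : ℝ) * c k)
    (h2 : Summable fun k : ℕ => (k : ℝ) ^ 2 * c k)
    (E M : ℝ)
    (hsum : ∑' k : ℕ, c k = 1)
    (hE : ∑' k : ℕ, (k : ℝ) * c k = E)
    (hM : ∑' k : ℕ, (k : ℝ) ^ 2 * c k = M)
    (ξ : ℝ) (hξ : 0 ≤ ξ) (N : ℝ) (hN : 0 < N) :
    1 - ((∑' k : ℕ, ((k : ℝ) + 1) * Real.cosh ξ ^ (-(k : ℝ)) * c k) / (E + 1)) ^ 2 ≤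
      N * ξ ^ 2 + (2 / N) * ((E + M) / (E + 1)) :=
  overlap_bound_general c hc h0 h1 h2 E M hsum hE hM ξ N hN
end

section
/- Let (c_k)_{k∈ℕ} be nonnegative reals with Σ_{k≥0} c_k = 1, Σ_{k≥0} k·c_k = E, and Σ_{k≥0} k²·c_k = M (all series convergent). Then for every ξ ≥ 0: 1 − ( Σ_{k≥0} (k+1)·(cosh ξ)^{−k}·c_k / (E+1) )² ≤ 2·ξ·√( 2·(E+M)/(E+1) ). -/
private lemma amgm_sqrt (a b t : ℝ) (ha : 0 ≤ a) (hb : 0 ≤ b) (ht : 0 < t) :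
    Real.sqrt (a * b) ≤ (t * a + b / t) / 2 := by
  have h1 : a * b = (t * a) * (b / t) := by field_simp
  rw [h1, Real.sqrt_mul (by positivity)]
  nlinarith [Real.sq_sqrt (show (0:ℝ) ≤ t * a by positivity),
    Real.sq_sqrt (show (0:ℝ) ≤ b / t by positivity),
    sq_nonneg (Real.sqrt (t * a) - Real.sqrt (b / t))]

private lemma one_sub_exp_le_sqrt (x : ℝ) (hx : 0 ≤ x) :
    1 - Real.exp (-x) ≤ Real.sqrt x := by
  rcases le_or_gt x 1 with h | h
  · have h2 : 1 - Real.exp (-x) ≤ x := by nlinarith [Real.add_one_le_exp (-x)]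
    have h3 : x ≤ Real.sqrt x := by
      have := Real.sqrt_le_sqrt (show x ^ 2 ≤ x by nlinarith)
      rwa [Real.sqrt_sq hx] at this
    linarith
  · have h2 : (1:ℝ) ≤ Real.sqrt x := by
      rw [show (1:ℝ) = Real.sqrt 1 by simp]
      exact Real.sqrt_le_sqrt h.le
    have := Real.exp_nonneg (-x)
    linarith

private lemma cosh_rpow_bound (ξ : ℝ) (k : ℕ) (hξ : 0 ≤ ξ) :
    1 - Real.cosh ξ ^ (-(k : ℝ)) ≤ ξ * Real.sqrt ((k : ℝ) / 2) := by
  have hA1 : 1 ≤ Real.cosh ξ := Real.one_le_cosh ξ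
  have hA0 : (0:ℝ) < Real.cosh ξ := by linarith
  have hk : (0:ℝ) ≤ (k:ℝ) := Nat.cast_nonneg k
  have hle : Real.cosh ξ ^ ((k:ℝ)) ≤ Real.exp ((k:ℝ) * (ξ ^ 2 / 2)) := by
    calc Real.cosh ξ ^ ((k:ℝ)) ≤ (Real.exp (ξ^2/2)) ^ ((k:ℝ)) :=
          Real.rpow_le_rpow hA0.le (Real.cosh_le_exp_half_sq ξ) hk
      _ = Real.exp ((k:ℝ) * (ξ^2/2)) := by
          rw [← Real.exp_one_rpow (ξ^2/2), ← Real.rpow_natCast, ← Real.rpow_mul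
            (Real.exp_pos 1).le]
          rw [Real.exp_one_rpow]
          ring_nf
  have hinv : Real.exp (-((k:ℝ) * (ξ^2/2))) ≤ Real.cosh ξ ^ (-(k:ℝ)) := by
    rw [Real.rpow_neg hA0.le, Real.exp_neg]
    exact inv_anti₀ (by positivity) hle
  have h2 : 1 - Real.exp (-((k:ℝ) * (ξ^2/2))) ≤ Real.sqrt ((k:ℝ) * (ξ^2/2)) :=
    one_sub_exp_le_sqrt _ (by positivity)
  have h3 : Real.sqrt ((k:ℝ) * (ξ^2/2)) = ξ * Real.sqrt ((k:ℝ)/2) := by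
    rw [show (k:ℝ) * (ξ^2/2) = ξ^2 * ((k:ℝ)/2) by ring, Real.sqrt_mul (sq_nonneg ξ),
      Real.sqrt_sq hξ]
  linarith [h3 ▸ h2]

set_option maxHeartbeats 1000000 in
/-- The core analytic inequality of Lemma 3 of the paper: for nonnegative
`(c_k)` with `Σ c_k = 1`, `Σ k c_k = E`, `Σ k² c_k = M`, and every `ξ ≥ 0`,
`1 − (Σ (k+1)(cosh ξ)^(−k) c_k / (E+1))² ≤ 2 ξ √(2 (E+M)/(E+1))`. -/
theorem overlap_bound_optimized (c : ℕ → ℝ) (hc : ∀ k, 0 ≤ c k)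
    (h0 : Summable c)
    (h1 : Summable fun k : ℕ => (k : ℝ) * c k)
    (h2 : Summable fun k : ℕ => (k : ℝ) ^ 2 * c k)
    (E M : ℝ)
    (hsum : ∑' k : ℕ, c k = 1)
    (hE : ∑' k : ℕ, (k : ℝ) * c k = E)
    (hM : ∑' k : ℕ, (k : ℝ) ^ 2 * c k = M)
    (ξ : ℝ) (hξ : 0 ≤ ξ) :
    1 - ((∑' k : ℕ, ((k : ℝ) + 1) * Real.cosh ξ ^ (-(k : ℝ)) * c k) / (E + 1)) ^ 2 ≤
      2 * ξ * Real.sqrt (2 * (E + M) / (E + 1)) := by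
  have hA1 : 1 ≤ Real.cosh ξ := Real.one_le_cosh ξ
  have hA0 : (0:ℝ) < Real.cosh ξ := by linarith
  have hEnn : 0 ≤ E := hE ▸ tsum_nonneg fun k => mul_nonneg (Nat.cast_nonneg k) (hc k)
  have hMnn : 0 ≤ M := hM ▸ tsum_nonneg fun k => mul_nonneg (sq_nonneg _) (hc k)
  have hT : (0:ℝ) < E + 1 := by linarith
  -- rpow facts
  have hple : ∀ k : ℕ, Real.cosh ξ ^ (-(k:ℝ)) ≤ 1 := fun k =>
    Real.rpow_le_one_of_one_le_of_nonpos hA1 (by simp [Nat.cast_nonneg])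
  have hpnn : ∀ k : ℕ, 0 ≤ Real.cosh ξ ^ (-(k:ℝ)) := fun k => Real.rpow_nonneg hA0.le _
  -- summability
  have hkc : Summable (fun k : ℕ => ((k:ℝ) + 1) * c k) := by
    have := h1.add h0
    simpa [add_mul, one_mul] using this
  have hTsum : ∑' k : ℕ, ((k:ℝ) + 1) * c k = E + 1 := by
    have : ∀ k : ℕ, ((k:ℝ) + 1) * c k = (k:ℝ) * c k + c k := fun k => by ring
    rw [tsum_congr this, Summable.tsum_add h1 h0, hE, hsum]
  have hSsum : Summable (fun k : ℕ => ((k:ℝ) + 1) * Real.cosh ξ ^ (-(k:ℝ)) * c k) := by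
    apply Summable.of_nonneg_of_le
      (fun k => mul_nonneg (mul_nonneg (by positivity) (hpnn k)) (hc k))
      (fun k => ?_) hkc
    have : ((k:ℝ) + 1) * Real.cosh ξ ^ (-(k:ℝ)) ≤ ((k:ℝ) + 1) * 1 :=
      mul_le_mul_of_nonneg_left (hple k) (by positivity)
    calc ((k:ℝ) + 1) * Real.cosh ξ ^ (-(k:ℝ)) * c k
        ≤ (((k:ℝ) + 1) * 1) * c k := mul_le_mul_of_nonneg_right this (hc k)
      _ = ((k:ℝ) + 1) * c k := by ring
  set S := ∑' k : ℕ, ((k:ℝ) + 1) * Real.cosh ξ ^ (-(k:ℝ)) * c k with hSdef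
  clear_value S
  have hS0 : 0 ≤ S := hSdef ▸ tsum_nonneg fun k => mul_nonneg (mul_nonneg (by positivity) (hpnn k)) (hc k)
  have hSle : S ≤ E + 1 := by
    rw [hSdef, ← hTsum]
    apply Summable.tsum_le_tsum (fun k => ?_) hSsum hkc
    calc ((k:ℝ) + 1) * Real.cosh ξ ^ (-(k:ℝ)) * c k
        ≤ (((k:ℝ) + 1) * 1) * c k :=
          mul_le_mul_of_nonneg_right
            (mul_le_mul_of_nonneg_left (hple k) (by positivity)) (hc k)
      _ = ((k:ℝ) + 1) * c k := by ring
  -- reduce to bounding (E+1) - S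
  have hstep : 1 - (S / (E + 1)) ^ 2 ≤ 2 * ((E + 1) - S) / (E + 1) := by
    have hx0 : 0 ≤ S / (E + 1) := div_nonneg hS0 hT.le
    have hx1 : S / (E + 1) ≤ 1 := (div_le_one hT).mpr hSle
    have : 2 * ((E + 1) - S) / (E + 1) = 2 * (1 - S / (E + 1)) := by
      field_simp
    rw [this]
    nlinarith [sq_nonneg (1 - S / (E + 1))]
  rcases eq_or_lt_of_le (by positivity : (0:ℝ) ≤ E + M) with hEM | hEM
  · -- degenerate case E + M = 0 : then c k = 0 for k ≥ 1, S = 1, E = 0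
    have hE0 : E = 0 := by linarith
    have hzero : ∀ k : ℕ, (k:ℝ) * c k = 0 := by
      intro k
      have hle := Summable.le_tsum h1 k (fun j _ => mul_nonneg (Nat.cast_nonneg j) (hc j))
      have hge : (0:ℝ) ≤ (k:ℝ) * c k := mul_nonneg (Nat.cast_nonneg k) (hc k)
      rw [hE, hE0] at hle
      linarith
    have hck : ∀ k : ℕ, k ≠ 0 → c k = 0 := by
      intro k hk
      have := hzero k
      have hk' : (k:ℝ) ≠ 0 := Nat.cast_ne_zero.mpr hk
      exact (mul_eq_zero.mp this).resolve_left hk'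
    have hc0 : c 0 = 1 := by
      rw [← hsum]
      exact (tsum_eq_single 0 fun k hk => hck k hk).symm
    have hS1 : S = 1 := by
      rw [hSdef]
      rw [tsum_eq_single 0 (fun k hk => by simp [hck k hk])]
      simp [hc0]
    rw [hS1, hE0]
    norm_num
    positivity
  · -- main case
    set t := Real.sqrt ((E + M) / (2 * (E + 1))) with htdef
    have ht : 0 < t := Real.sqrt_pos.mpr (by positivity)
    have ht2 : t ^ 2 = (E + M) / (2 * (E + 1)) := Real.sq_sqrt (by positivity)
    clear_value t
    -- pointwise bound
    have hpt : ∀ k : ℕ, ((k:ℝ) + 1) * c k - ξ / 2 * (t * (((k:ℝ) + 1) * c k)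
        + ((k:ℝ)^2 * c k + (k:ℝ) * c k) / (2 * t))
        ≤ ((k:ℝ) + 1) * Real.cosh ξ ^ (-(k:ℝ)) * c k := by
      intro k
      have hb : 1 - Real.cosh ξ ^ (-(k:ℝ)) ≤ ξ * Real.sqrt ((k:ℝ)/2) :=
        cosh_rpow_bound ξ k hξ
      have hsq : ((k:ℝ) + 1) * Real.sqrt ((k:ℝ)/2)
          = Real.sqrt (((k:ℝ) + 1) * (((k:ℝ) + 1) * (k:ℝ) / 2)) := by
        rw [show ((k:ℝ) + 1) * (((k:ℝ) + 1) * (k:ℝ) / 2) = ((k:ℝ)+1)^2 * ((k:ℝ)/2) by ring,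
          Real.sqrt_mul (sq_nonneg _), Real.sqrt_sq (by positivity)]
      have hag : Real.sqrt (((k:ℝ) + 1) * (((k:ℝ) + 1) * (k:ℝ) / 2))
          ≤ (t * ((k:ℝ) + 1) + (((k:ℝ) + 1) * (k:ℝ) / 2) / t) / 2 :=
        amgm_sqrt _ _ t (by positivity) (by positivity) ht
      have hkey : ((k:ℝ) + 1) * (1 - Real.cosh ξ ^ (-(k:ℝ)))
          ≤ ξ * ((t * ((k:ℝ) + 1) + (((k:ℝ) + 1) * (k:ℝ) / 2) / t) / 2) := by
        calc ((k:ℝ) + 1) * (1 - Real.cosh ξ ^ (-(k:ℝ)))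
            ≤ ((k:ℝ) + 1) * (ξ * Real.sqrt ((k:ℝ)/2)) :=
              mul_le_mul_of_nonneg_left hb (by positivity)
          _ = ξ * (((k:ℝ) + 1) * Real.sqrt ((k:ℝ)/2)) := by ring
          _ = ξ * Real.sqrt (((k:ℝ) + 1) * (((k:ℝ) + 1) * (k:ℝ) / 2)) := by rw [hsq]
          _ ≤ ξ * ((t * ((k:ℝ) + 1) + (((k:ℝ) + 1) * (k:ℝ) / 2) / t) / 2) :=
              mul_le_mul_of_nonneg_left hag hξ
      have hmul := mul_le_mul_of_nonneg_right hkey (hc k)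
      have hexp : ξ / 2 * (t * (((k:ℝ) + 1) * c k)
          + ((k:ℝ)^2 * c k + (k:ℝ) * c k) / (2 * t))
          = ξ * ((t * ((k:ℝ) + 1) + (((k:ℝ) + 1) * (k:ℝ) / 2) / t) / 2) * c k := by
        field_simp
      nlinarith [hmul, hexp]
    -- summability of the lower-bound function
    have hsum2 : Summable (fun k : ℕ => (k:ℝ)^2 * c k + (k:ℝ) * c k) := h2.add h1
    have hR : Summable (fun k : ℕ => ξ / 2 * (t * (((k:ℝ) + 1) * c k)
        + ((k:ℝ)^2 * c k + (k:ℝ) * c k) / (2 * t))) :=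
      (((hkc.mul_left t).add (hsum2.div_const (2 * t))).mul_left (ξ / 2))
    have hL : Summable (fun k : ℕ => ((k:ℝ) + 1) * c k - ξ / 2 * (t * (((k:ℝ) + 1) * c k)
        + ((k:ℝ)^2 * c k + (k:ℝ) * c k) / (2 * t))) := hkc.sub hR
    have hRsumval : ∑' k : ℕ, ξ / 2 * (t * (((k:ℝ) + 1) * c k)
        + ((k:ℝ)^2 * c k + (k:ℝ) * c k) / (2 * t))
        = ξ / 2 * (t * (E + 1) + (M + E) / (2 * t)) := by
      rw [tsum_mul_left, Summable.tsum_add (hkc.mul_left t) (hsum2.div_const (2 * t)),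
        tsum_mul_left, tsum_div_const, hTsum, Summable.tsum_add h2 h1, hM, hE]
    have hmain : E + 1 - ξ / 2 * (t * (E + 1) + (M + E) / (2 * t)) ≤ S := by
      have := Summable.tsum_le_tsum hpt hL hSsum
      rwa [Summable.tsum_sub hkc hR, hTsum, hRsumval, ← hSdef] at this
    -- simplify: (M+E)/(2t) = t*(E+1)
    have ht2' : t ^ 2 * (2 * (E + 1)) = E + M := by
      rw [ht2]; field_simp
    have hsimp : (M + E) / (2 * t) = t * (E + 1) := by
      have h2t : (2 * t) ≠ 0 := by positivity
      field_simp
      nlinarith [ht2']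
    rw [hsimp] at hmain
    have hmain2 : E + 1 - ξ * t * (E + 1) ≤ S := by
      have heq : ξ / 2 * (t * (E + 1) + t * (E + 1)) = ξ * t * (E + 1) := by ring
      linarith [hmain, heq]
    have hfinal : 2 * ((E + 1) - S) / (E + 1) ≤ 2 * ξ * t := by
      rw [div_le_iff₀ hT]
      linarith [hmain2]
    have htle : t ≤ Real.sqrt (2 * (E + M) / (E + 1)) := by
      rw [htdef]
      apply Real.sqrt_le_sqrt
      rw [div_le_div_iff₀ (by positivity) hT]
      nlinarith [mul_pos hEM hT]
    calc 1 - (S / (E + 1)) ^ 2 ≤ 2 * ((E + 1) - S) / (E + 1) := hstep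
      _ ≤ 2 * ξ * t := hfinal
      _ ≤ 2 * ξ * Real.sqrt (2 * (E + M) / (E + 1)) :=
          mul_le_mul_of_nonneg_left htle (by positivity)
end
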